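/- arXiv:2209.06974 — 5 statements merged into one kernel-verified Lean document; each statement's English description precedes it below -/
import Mathlib

section
/- Let {B_k} be a sequence of column-stochastic nonnegative n×n matrices, each compatible with a strongly connected directed graph G_k on n nodes (with positive diagonal entries and [B_k]_{ji} > 0 iff j is an out-neighbor of i or j = i), and suppose all positive entries of each B_k are at least b ∈ (0,1). Define π_0 = (1/n)·1 and π_{k+1} = B_k π_k. Then each π_k is a stochastic vector and [π_k]_i ≥ bⁿ/n for all i ∈ [n] and k ≥ 0. -/
private lemma exists_cross {α : Type*} [DecidableEq α] (P : α → α → Prop) (S : Finset α) :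
    ∀ (w : List α) (j l : α), w.Chain' P → w.head? = some j → w.getLast? = some l →
      j ∈ S → l ∉ S → ∃ a c, P a c ∧ a ∈ S ∧ c ∉ S := by
  intro w
  induction w with
  | nil => intro j l _ hh; simp at hh
  | cons a tl ih =>
    intro j l hch hh hl hjS hlS
    cases tl with
    | nil =>
      simp at hh hl; subst hh; subst hl; exact absurd hjS hlS
    | cons c tl' =>
      obtain ⟨hac, hch'⟩ := List.isChain_cons_cons.mp hch
      have hj : j = a := by simpa using hh.symm
      subst hj
      by_cases hcS : c ∈ S
      · exact ih c l hch' rfl (by simpa [List.getLast?_cons_cons] using hl) hcS hlS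
      · exact ⟨j, c, hac, hjS, hcS⟩

theorem stmt_6 {n : ℕ} (hn : 0 < n) (b : ℝ) (hb : b ∈ Set.Ioo (0 : ℝ) 1)
    (E : ℕ → Fin n → Fin n → Prop)
    (hconn : ∀ k (j l : Fin n),
      ∃ w : List (Fin n), w.head? = some j ∧ w.getLast? = some l ∧ w.Chain' (E k))
    (B : ℕ → Matrix (Fin n) (Fin n) ℝ)
    (hBnn : ∀ k i j, 0 ≤ B k i j)
    (hBcol : ∀ k j, ∑ i, B k i j = 1)
    (hBcompat : ∀ k (j i : Fin n), 0 < B k j i ↔ (E k i j ∨ j = i))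
    (hBb : ∀ k i j, 0 < B k i j → b ≤ B k i j)
    (π : ℕ → Fin n → ℝ)
    (hπ0 : ∀ i, π 0 i = 1 / n)
    (hπrec : ∀ k, π (k + 1) = (B k).mulVec (π k)) :
    ∀ k, (∀ i, 0 ≤ π k i) ∧ (∑ i, π k i = 1) ∧ ∀ i, b ^ n / n ≤ π k i := by
  obtain ⟨hb0, hb1⟩ := hb
  have hnR : (0 : ℝ) < n := by exact_mod_cast hn
  -- Part A: nonnegativity and stochasticity
  have hA : ∀ k, (∀ i, 0 ≤ π k i) ∧ (∑ i, π k i = 1) := by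
    intro k
    induction k with
    | zero =>
      constructor
      · intro i; rw [hπ0]; positivity
      · simp only [hπ0]
        rw [Finset.sum_const, Finset.card_univ, Fintype.card_fin, nsmul_eq_mul]
        field_simp
    | succ k ih =>
      obtain ⟨ihnn, ihsum⟩ := ih
      constructor
      · intro i
        rw [hπrec]
        simp only [Matrix.mulVec, dotProduct]
        exact Finset.sum_nonneg fun j _ => mul_nonneg (hBnn k i j) (ihnn j)
      · rw [hπrec]
        simp only [Matrix.mulVec, dotProduct]
        rw [Finset.sum_comm]
        calc ∑ j, ∑ i, B k i j * π k j
            = ∑ j, (∑ i, B k i j) * π k j := by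
              simp [Finset.sum_mul]
          _ = ∑ j, π k j := by simp [hBcol]
          _ = 1 := ihsum
  -- one-step lemma
  have hstep : ∀ k (i j : Fin n), 0 < B k j i → b * π k i ≤ π (k + 1) j := by
    intro k i j hpos
    rw [hπrec]
    simp only [Matrix.mulVec, dotProduct]
    calc b * π k i ≤ B k j i * π k i :=
          mul_le_mul_of_nonneg_right (hBb k j i hpos) ((hA k).1 i)
      _ ≤ ∑ l, B k j l * π k l :=
          Finset.single_le_sum (fun l _ => mul_nonneg (hBnn k j l) ((hA k).1 l))
            (Finset.mem_univ i)
  have hselfpos : ∀ k (i : Fin n), 0 < B k i i := fun k i => (hBcompat k i i).mpr (Or.inr rfl)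
  -- self-loop iteration
  have hself : ∀ k t (i : Fin n), b ^ t * π k i ≤ π (k + t) i := by
    intro k t i
    induction t with
    | zero => simp
    | succ t ih =>
      have := hstep (k + t) i i (hselfpos (k + t) i)
      calc b ^ (t + 1) * π k i = b * (b ^ t * π k i) := by ring
        _ ≤ b * π (k + t) i := mul_le_mul_of_nonneg_left ih hb0.le
        _ ≤ π (k + t + 1) i := this
  -- growing set lemma
  have hgrow : ∀ k (j₀ : Fin n) t, ∃ S : Finset (Fin n),
      min (t + 1) n ≤ S.card ∧ ∀ u ∈ S, b ^ t * π k j₀ ≤ π (k + t) u := by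
    intro k j₀ t
    induction t with
    | zero =>
      refine ⟨{j₀}, ?_, ?_⟩
      · simp [hn]
      · intro u hu; simp at hu; subst hu; simp
    | succ t ih =>
      obtain ⟨S, hcard, hS⟩ := ih
      have hSne : S.Nonempty := by
        rw [← Finset.card_pos]
        calc 0 < min (t + 1) n := lt_min (Nat.succ_pos t) hn
          _ ≤ S.card := hcard
      by_cases huniv : S = Finset.univ
      · refine ⟨Finset.univ, ?_, ?_⟩
        · simp
        · intro u _
          have h1 : b ^ t * π k j₀ ≤ π (k + t) u := hS u (huniv ▸ Finset.mem_univ u)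
          calc b ^ (t + 1) * π k j₀ = b * (b ^ t * π k j₀) := by ring
            _ ≤ b * π (k + t) u := mul_le_mul_of_nonneg_left h1 hb0.le
            _ ≤ π (k + t + 1) u := hstep (k + t) u u (hselfpos (k + t) u)
      · obtain ⟨l, hl⟩ : ∃ l, l ∉ S := by
          by_contra h
          push_neg at h
          exact huniv (Finset.eq_univ_iff_forall.mpr h)
        obtain ⟨j, hj⟩ := hSne
        obtain ⟨w, hwh, hwl, hwch⟩ := hconn (k + t) j l
        obtain ⟨a, c, hac, haS, hcS⟩ := exists_cross (E (k + t)) S w j l hwch hwh hwl hj hl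
        refine ⟨insert c S, ?_, ?_⟩
        · rw [Finset.card_insert_of_notMem hcS]
          have hn' : S.card + 1 ≤ n := by
            have : S ⊂ Finset.univ := Finset.ssubset_univ_iff.mpr huniv
            have := Finset.card_lt_card this
            simpa using this
          omega
        · intro u hu
          rcases Finset.mem_insert.mp hu with hu | hu
          · subst hu
            have hBpos : 0 < B (k + t) u a := (hBcompat (k + t) u a).mpr (Or.inl hac)
            calc b ^ (t + 1) * π k j₀ = b * (b ^ t * π k j₀) := by ring
              _ ≤ b * π (k + t) a := mul_le_mul_of_nonneg_left (hS a haS) hb0.le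
              _ ≤ π (k + t + 1) u := hstep (k + t) a u hBpos
          · calc b ^ (t + 1) * π k j₀ = b * (b ^ t * π k j₀) := by ring
              _ ≤ b * π (k + t) u := mul_le_mul_of_nonneg_left (hS u hu) hb0.le
              _ ≤ π (k + t + 1) u := hstep (k + t) u u (hselfpos (k + t) u)
  -- existence of heavy node
  have hheavy : ∀ k, ∃ j₀, (1 : ℝ) / n ≤ π k j₀ := by
    intro k
    by_contra h
    push_neg at h
    have : ∑ i : Fin n, π k i < ∑ i : Fin n, (1 : ℝ) / n :=
      Finset.sum_lt_sum_of_nonempty (Finset.univ_nonempty_iff.mpr ⟨⟨0, hn⟩⟩)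
        (fun i _ => h i)
    rw [(hA k).2] at this
    rw [Finset.sum_const, Finset.card_univ, Fintype.card_fin, nsmul_eq_mul] at this
    have : (1 : ℝ) < 1 := by
      calc (1 : ℝ) < n * (1 / n) := this
        _ = 1 := by field_simp
    linarith
  intro k
  refine ⟨(hA k).1, (hA k).2, ?_⟩
  intro i
  rcases le_or_gt k n with hk | hk
  · -- small k: use self-loops from time 0
    have h1 : b ^ k * π 0 i ≤ π k i := by
      have := hself 0 k i
      simpa using this
    have h2 : b ^ n ≤ b ^ k := pow_le_pow_of_le_one hb0.le hb1.le hk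
    calc b ^ n / n = b ^ n * (1 / n) := by ring
      _ ≤ b ^ k * (1 / n) := by
        apply mul_le_mul_of_nonneg_right h2
        positivity
      _ = b ^ k * π 0 i := by rw [hπ0]
      _ ≤ π k i := h1
  · -- large k: heavy node at time k - n, spread over n steps
    obtain ⟨j₀, hj₀⟩ := hheavy (k - n)
    obtain ⟨S, hcard, hS⟩ := hgrow (k - n) j₀ n
    have hSuniv : S = Finset.univ := by
      apply Finset.eq_univ_of_card
      have h1 : n ≤ S.card := by
        rwa [min_eq_right (Nat.le_succ n)] at hcard
      have h2 : S.card ≤ n := by simpa using Finset.card_le_univ S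
      rw [Fintype.card_fin]
      omega
    have hi : b ^ n * π (k - n) j₀ ≤ π (k - n + n) i :=
      hS i (hSuniv ▸ Finset.mem_univ i)
    rw [Nat.sub_add_cancel hk.le] at hi
    calc b ^ n / n = b ^ n * (1 / n) := by ring
      _ ≤ b ^ n * π (k - n) j₀ := by
        apply mul_le_mul_of_nonneg_left hj₀
        positivity
      _ ≤ π k i := hi
end

section
/- Let G = ([n], E) be a strongly connected directed graph with vectors x_1,...,x_n ∈ R^p at the nodes. Then Σ_{(j,ℓ)∈E} ‖x_j − x_ℓ‖² ≥ (1/(D(G)·K(G))) Σ_{j=1}^n Σ_{ℓ=j+1}^n ‖x_j − x_ℓ‖², where D(G) is the graph diameter and K(G) the maximal edge-utility. -/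
open scoped Classical

/-- `w` is a directed walk in the graph with edge relation `E`, starting at `j`
and ending at `l`. -/
def IsWalkFromTo {n : ℕ} (E : Fin n → Fin n → Prop) (w : List (Fin n)) (j l : Fin n) : Prop :=
  w.head? = some j ∧ w.getLast? = some l ∧ w.Chain' E

/-- A directed graph is strongly connected if every ordered pair of nodes is
joined by a directed walk. -/
def StronglyConnectedDigraph {n : ℕ} (E : Fin n → Fin n → Prop) : Prop :=
  ∀ j l : Fin n, ∃ w : List (Fin n), IsWalkFromTo E w j l

/-- The shortest-path distance from `j` to `l` (number of edges). -/
noncomputable def graphDist {n : ℕ} (E : Fin n → Fin n → Prop) (j l : Fin n) : ℕ :=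
  sInf {m | ∃ w : List (Fin n), IsWalkFromTo E w j l ∧ w.length = m + 1}

/-- The diameter: the longest among the shortest directed paths connecting
ordered pairs of distinct nodes. -/
noncomputable def graphDiam {n : ℕ} (E : Fin n → Fin n → Prop) : ℕ :=
  sSup {d | ∃ j l : Fin n, j ≠ l ∧ graphDist E j l = d}

/-- The edge `(a, b)` appears (consecutively) in the walk `w`. -/
def edgeInWalk {n : ℕ} (a b : Fin n) (w : List (Fin n)) : Prop :=
  (a, b) ∈ w.zip w.tail

/-- `P` assigns to every ordered pair of distinct nodes a shortest directed path
between them. -/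
def IsShortestPathCovering {n : ℕ} (E : Fin n → Fin n → Prop)
    (P : Fin n → Fin n → List (Fin n)) : Prop :=
  ∀ j l : Fin n, j ≠ l →
    IsWalkFromTo E (P j l) j l ∧ (P j l).length = graphDist E j l + 1

/-- The utility of the edge `(a, b)` with respect to the covering `P`: the
number of paths of `P` passing through `(a, b)`. -/
noncomputable def edgeUtility {n : ℕ} (P : Fin n → Fin n → List (Fin n)) (a b : Fin n) : ℕ :=
  (Finset.univ.filter fun q : Fin n × Fin n => q.1 ≠ q.2 ∧ edgeInWalk a b (P q.1 q.2)).card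

/-- The maximum edge-utility of a covering `P`, over all edges of the graph. -/
noncomputable def coveringMaxUtility {n : ℕ} (E : Fin n → Fin n → Prop)
    (P : Fin n → Fin n → List (Fin n)) : ℕ :=
  (Finset.univ.filter fun q : Fin n × Fin n => E q.1 q.2).sup fun q => edgeUtility P q.1 q.2

/-- The maximal edge-utility `K(G)`: the maximum of `K(P)` over all
shortest-path coverings `P`. -/
noncomputable def maxEdgeUtility {n : ℕ} (E : Fin n → Fin n → Prop) : ℕ :=
  sSup {u | ∃ P : Fin n → Fin n → List (Fin n),
    IsShortestPathCovering E P ∧ coveringMaxUtility E P = u}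

/-- The smallest positive entry of a matrix. -/
noncomputable def minPosEntry {n : ℕ} (A : Matrix (Fin n) (Fin n) ℝ) : ℝ :=
  sInf {v : ℝ | 0 < v ∧ ∃ i j, A i j = v}


section Aux
variable {n : ℕ} {E : Fin n → Fin n → Prop}

lemma walk_ne_nil {w : List (Fin n)} {j l : Fin n} (h : IsWalkFromTo E w j l) : w ≠ [] := by
  intro h0; rw [h0] at h; exact absurd h.1 (by simp)

lemma walk_length_pos {w : List (Fin n)} {j l : Fin n} (h : IsWalkFromTo E w j l) :
    0 < w.length :=
  List.length_pos_iff.2 (walk_ne_nil h)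

lemma telescope {V : Type*} [AddCommGroup V] (x : Fin n → V) :
    ∀ (w : List (Fin n)) (j l : Fin n), w.head? = some j → w.getLast? = some l →
      ((w.zip w.tail).map (fun e => x e.1 - x e.2)).sum = x j - x l := by
  intro w
  induction w with
  | nil => intro j l h; exact absurd h (by simp)
  | cons a t ih =>
    intro j l hj hl
    simp only [List.head?_cons, Option.some.injEq] at hj
    subst hj
    cases t with
    | nil =>
      simp only [List.getLast?_singleton, Option.some.injEq] at hl
      subst hl; simp
    | cons b t' =>
      rw [List.getLast?_cons_cons] at hl
      have h2 := ih b l rfl hl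
      simp only [List.tail_cons] at h2 ⊢
      rw [List.zip_cons_cons, List.map_cons, List.sum_cons, h2]
      abel

lemma edges_of_zip : ∀ (w : List (Fin n)), w.Chain' E →
    ∀ q ∈ w.zip w.tail, E q.1 q.2 := by
  intro w
  induction w with
  | nil => simp
  | cons a t ih =>
    cases t with
    | nil => simp
    | cons b t' =>
      intro hc q hq
      rw [show List.Chain' E (a :: b :: t') = List.IsChain E (a :: b :: t') from rfl, List.isChain_cons_cons] at hc
      simp only [List.tail_cons, List.zip_cons_cons, List.mem_cons] at hq
      rcases hq with rfl | hq
      · exact hc.1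
      · exact ih hc.2 q (by simpa using hq)

lemma zip_nodup : ∀ (w : List (Fin n)), w.Nodup → (w.zip w.tail).Nodup := by
  intro w
  induction w with
  | nil => simp
  | cons a t ih =>
    cases t with
    | nil => simp
    | cons b t' =>
      intro hn
      simp only [List.tail_cons, List.zip_cons_cons, List.nodup_cons]
      constructor
      · intro hmem
        have : a ∈ b :: t' := (List.of_mem_zip hmem).1
        exact (List.nodup_cons.1 hn).1 (by simpa using this)
      · have := ih (List.nodup_cons.1 hn).2
        simpa using this

lemma cut_walk {w : List (Fin n)} {j l : Fin n} (hw : IsWalkFromTo E w j l)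
    {i k : ℕ} (hik : i < k) (hk : k < w.length)
    (heq : w[i]'(lt_trans hik hk) = w[k]) :
    ∃ w', IsWalkFromTo E w' j l ∧ w'.length < w.length := by
  obtain ⟨hh, hl, hc⟩ := hw
  have hi : i < w.length := lt_trans hik hk
  refine ⟨w.take (i+1) ++ w.drop (k+1), ⟨?_, ?_, ?_⟩, ?_⟩
  · rw [List.head?_append_of_ne_nil]
    · rw [← hh]
      cases w with
      | nil => simp at hi
      | cons c t => simp [List.take_succ_cons]
    · apply List.ne_nil_of_length_pos
      rw [List.length_take]
      omega
  · -- getLast?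
    by_cases hkl : k + 1 < w.length
    · rw [List.getLast?_append_of_ne_nil]
      · rw [List.getLast?_eq_getElem?, List.length_drop, List.getElem?_drop]
        rw [List.getLast?_eq_getElem?] at hl
        rw [← hl]
        congr 1
        omega
      · apply List.ne_nil_of_length_pos
        rw [List.length_drop]
        omega
    · have hke : k + 1 = w.length := by omega
      have hdrop : w.drop (k+1) = [] := by
        apply List.eq_nil_of_length_eq_zero
        simp [List.length_drop, hke]
      rw [hdrop, List.append_nil]
      rw [List.getLast?_eq_getElem?, List.length_take]
      have hlen : min (i+1) w.length = i + 1 := min_eq_left (by omega)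
      rw [hlen]
      simp only [Nat.add_sub_cancel]
      rw [List.getElem?_take, if_pos (by omega : i < i + 1)]
      rw [List.getElem?_eq_getElem hi, heq]
      have hk' : w.length - 1 = k := by omega
      rw [List.getLast?_eq_getElem?, hk', List.getElem?_eq_getElem hk] at hl
      exact hl
  · -- Chain'
    apply List.isChain_append.2
    refine ⟨hc.take _, hc.drop _, ?_⟩
    intro a ha b hb
    by_cases hkl : k + 1 < w.length
    · have hga : (w.take (i+1)).getLast? = some (w[i]'hi) := by
        rw [List.getLast?_eq_getElem?, List.length_take]
        have hlen : min (i+1) w.length = i + 1 := min_eq_left (by omega)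
        rw [hlen]
        simp only [Nat.add_sub_cancel]
        rw [List.getElem?_take, if_pos (by omega : i < i + 1)]
        exact List.getElem?_eq_getElem hi
      have hgb : (w.drop (k+1)).head? = some (w[k+1]'hkl) := by
        rw [List.head?_drop]
        exact List.getElem?_eq_getElem hkl
      rw [hga, Option.mem_def, Option.some.injEq] at ha
      rw [hgb, Option.mem_def, Option.some.injEq] at hb
      subst ha
      subst hb
      rw [heq]
      have := List.isChain_iff_getElem.1 hc k (by omega)
      simpa [List.get_eq_getElem] using this
    · have hdrop : w.drop (k+1) = [] := by
        apply List.eq_nil_of_length_eq_zero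
        simp [List.length_drop]; omega
      rw [hdrop] at hb
      simp at hb
  · rw [List.length_append, List.length_take, List.length_drop]
    omega

end Aux
section Aux2
variable {n : ℕ} {E : Fin n → Fin n → Prop}


lemma list_map_sum_eq {α M : Type*} [AddCommMonoid M] (z : List α) (h : α → M) :
    (z.map h).sum = ∑ i : Fin z.length, h (z.get i) := by
  conv_lhs => rw [← List.ofFn_get z, List.map_ofFn]
  rw [List.sum_ofFn]
  rfl

lemma dist_walk_exists (hconn : StronglyConnectedDigraph E) (j l : Fin n) :
    ∃ w, IsWalkFromTo E w j l ∧ w.length = graphDist E j l + 1 := by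
  have hne : {m | ∃ w : List (Fin n), IsWalkFromTo E w j l ∧ w.length = m + 1}.Nonempty := by
    obtain ⟨w, hw⟩ := hconn j l
    exact ⟨w.length - 1, w, hw, by have := walk_length_pos hw; omega⟩
  exact Nat.sInf_mem hne

lemma shortest_nodup {w : List (Fin n)} {j l : Fin n} (hw : IsWalkFromTo E w j l)
    (hlen : w.length = graphDist E j l + 1) : w.Nodup := by
  by_contra hnd
  rw [List.nodup_iff_injective_get] at hnd
  rw [Function.not_injective_iff] at hnd
  obtain ⟨a, b, hab, hne⟩ := hnd
  have hcut : ∃ w', IsWalkFromTo E w' j l ∧ w'.length < w.length := by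
    rcases lt_or_gt_of_ne hne with h | h
    · exact cut_walk hw h b.isLt (by simpa [List.get_eq_getElem] using hab)
    · exact cut_walk hw h a.isLt (by simpa [List.get_eq_getElem] using hab.symm)
  obtain ⟨w', hw', hlt⟩ := hcut
  have hple := walk_length_pos hw'
  have : graphDist E j l ≤ w'.length - 1 :=
    Nat.sInf_le ⟨w', hw', by omega⟩
  omega

lemma graphDist_pos (hconn : StronglyConnectedDigraph E) {j l : Fin n} (hjl : j ≠ l) :
    1 ≤ graphDist E j l := by
  obtain ⟨w, hw, hlen⟩ := dist_walk_exists hconn j l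
  by_contra h
  have h0 : graphDist E j l = 0 := by omega
  rw [h0] at hlen
  obtain ⟨a, rfl⟩ : ∃ a, w = [a] := List.length_eq_one_iff.1 hlen
  obtain ⟨h1, h2, -⟩ := hw
  simp only [List.head?_cons, Option.some.injEq] at h1
  simp only [List.getLast?_singleton, Option.some.injEq] at h2
  exact hjl (by rw [← h1, ← h2])

lemma diam_bdd : BddAbove {d | ∃ j l : Fin n, j ≠ l ∧ graphDist E j l = d} := by
  have hsub : {d | ∃ j l : Fin n, j ≠ l ∧ graphDist E j l = d} ⊆
      (fun q : Fin n × Fin n => graphDist E q.1 q.2) '' Set.univ := by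
    rintro d ⟨j, l, -, rfl⟩; exact ⟨(j, l), trivial, rfl⟩
  exact ((Set.finite_univ.image _).subset hsub).bddAbove

lemma dist_le_diam {j l : Fin n} (hjl : j ≠ l) : graphDist E j l ≤ graphDiam E :=
  le_csSup diam_bdd ⟨j, l, hjl, rfl⟩

lemma covering_exists (hconn : StronglyConnectedDigraph E) :
    ∃ P, IsShortestPathCovering E P :=
  ⟨fun j l => Classical.choose (dist_walk_exists hconn j l),
    fun j l _ => Classical.choose_spec (dist_walk_exists hconn j l)⟩

lemma K_bdd : BddAbove {u | ∃ P : Fin n → Fin n → List (Fin n),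
    IsShortestPathCovering E P ∧ coveringMaxUtility E P = u} := by
  refine ⟨Fintype.card (Fin n × Fin n), ?_⟩
  rintro u ⟨P, -, rfl⟩
  apply Finset.sup_le
  intro q _
  exact le_trans (Finset.card_filter_le _ _) (le_of_eq (Finset.card_univ))

lemma covering_le_K {P : Fin n → Fin n → List (Fin n)} (hP : IsShortestPathCovering E P) :
    coveringMaxUtility E P ≤ maxEdgeUtility E :=
  le_csSup K_bdd ⟨P, hP, rfl⟩

end Aux2

theorem stmt_9 {n p : ℕ} (E : Fin n → Fin n → Prop)
    (hconn : StronglyConnectedDigraph E)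
    (x : Fin n → EuclideanSpace ℝ (Fin p)) :
    (1 / ((graphDiam E : ℝ) * (maxEdgeUtility E : ℝ))) *
        ∑ j, ∑ ℓ, (if j < ℓ then ‖x j - x ℓ‖ ^ 2 else 0) ≤
      ∑ q ∈ Finset.univ.filter (fun q : Fin n × Fin n => E q.1 q.2),
        ‖x q.1 - x q.2‖ ^ 2 := by
  classical
  have hRHS : (0:ℝ) ≤ ∑ q ∈ Finset.univ.filter (fun q : Fin n × Fin n => E q.1 q.2),
      ‖x q.1 - x q.2‖ ^ 2 := Finset.sum_nonneg fun q _ => by positivity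
  by_cases hex : ∃ j l : Fin n, j ≠ l
  · obtain ⟨j0, l0, hjl0⟩ := hex
    obtain ⟨P, hP⟩ := covering_exists hconn
    set edges := Finset.univ.filter (fun q : Fin n × Fin n => E q.1 q.2) with hedges
    set f : Fin n × Fin n → ℝ := fun q => ‖x q.1 - x q.2‖ ^ 2 with hf
    have hfnn : ∀ q, 0 ≤ f q := fun q => by positivity
    -- key per-pair estimate
    have key : ∀ r : Fin n × Fin n, r.1 ≠ r.2 →
        f r ≤ (graphDiam E : ℝ) *
          ∑ q ∈ edges, (if edgeInWalk q.1 q.2 (P r.1 r.2) then f q else 0) := by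
      rintro ⟨j, l⟩ hjl
      obtain ⟨hw, hlen⟩ := hP j l hjl
      set w := P j l with hwdef
      have hnd : w.Nodup := shortest_nodup hw hlen
      set z := w.zip w.tail with hz
      have hzlen : z.length = graphDist E j l := by
        rw [hz, List.length_zip, List.length_tail, hlen]; omega
      have htel : x j - x l = (z.map (fun e => x e.1 - x e.2)).sum :=
        (telescope x w j l hw.1 hw.2.1).symm
      have hnormsum : ‖x j - x l‖ ≤ ∑ i : Fin z.length, ‖x (z.get i).1 - x (z.get i).2‖ := by
        rw [htel, list_map_sum_eq]
        exact norm_sum_le _ _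
      have hcs : (∑ i : Fin z.length, ‖x (z.get i).1 - x (z.get i).2‖) ^ 2 ≤
          (z.length : ℝ) * ∑ i : Fin z.length, ‖x (z.get i).1 - x (z.get i).2‖ ^ 2 := by
        have h := sq_sum_le_card_mul_sum_sq (s := (Finset.univ : Finset (Fin z.length)))
          (f := fun i : Fin z.length => ‖x (z.get i).1 - x (z.get i).2‖)
        simpa using h
      have hsub : z.toFinset ⊆ edges := by
        intro q hq
        rw [List.mem_toFinset] at hq
        exact Finset.mem_filter.2 ⟨Finset.mem_univ _, edges_of_zip w hw.2.2 q hq⟩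
      have hset : edges.filter (fun q => edgeInWalk q.1 q.2 w) = z.toFinset := by
        ext q
        rw [Finset.mem_filter, List.mem_toFinset]
        simp only [Finset.mem_filter, List.mem_toFinset, edgeInWalk]
        constructor
        · rintro ⟨-, hq⟩
          simpa using hq
        · intro hq
          refine ⟨hsub (List.mem_toFinset.2 hq), ?_⟩
          simpa using hq
      have hsum2 : ∑ i : Fin z.length, ‖x (z.get i).1 - x (z.get i).2‖ ^ 2 =
          ∑ q ∈ edges, (if edgeInWalk q.1 q.2 w then f q else 0) := by
        rw [← Finset.sum_filter, hset, List.sum_toFinset _ (zip_nodup w hnd),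
          list_map_sum_eq]
      have hDle : (z.length : ℝ) ≤ (graphDiam E : ℝ) := by
        rw [hzlen]
        exact_mod_cast dist_le_diam hjl
      calc f (j, l) = ‖x j - x l‖ ^ 2 := rfl
        _ ≤ (∑ i : Fin z.length, ‖x (z.get i).1 - x (z.get i).2‖) ^ 2 := by
            apply pow_le_pow_left₀ (norm_nonneg _) hnormsum
        _ ≤ (z.length : ℝ) * ∑ i : Fin z.length, ‖x (z.get i).1 - x (z.get i).2‖ ^ 2 := hcs
        _ = (z.length : ℝ) * ∑ q ∈ edges, (if edgeInWalk q.1 q.2 w then f q else 0) := by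
            rw [hsum2]
        _ ≤ (graphDiam E : ℝ) * ∑ q ∈ edges, (if edgeInWalk q.1 q.2 w then f q else 0) := by
            apply mul_le_mul_of_nonneg_right hDle
            apply Finset.sum_nonneg
            intro q _
            split
            · exact hfnn q
            · exact le_rfl
    -- K bounds
    have hKle : ∀ q ∈ edges, (edgeUtility P q.1 q.2 : ℝ) ≤ (maxEdgeUtility E : ℝ) := by
      intro q hq
      have h1 : edgeUtility P q.1 q.2 ≤ coveringMaxUtility E P :=
        Finset.le_sup (f := fun q : Fin n × Fin n => edgeUtility P q.1 q.2) hq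
      exact_mod_cast le_trans h1 (covering_le_K hP)
    have hD1 : (1:ℝ) ≤ (graphDiam E : ℝ) := by
      exact_mod_cast le_trans (graphDist_pos hconn hjl0) (dist_le_diam hjl0)
    have hK1 : (1:ℝ) ≤ (maxEdgeUtility E : ℝ) := by
      obtain ⟨hw0, hlen0⟩ := hP j0 l0 hjl0
      set w0 := P j0 l0 with hw0def
      have hzl : (w0.zip w0.tail).length = graphDist E j0 l0 := by
        rw [List.length_zip, List.length_tail, hlen0]; omega
      have hzpos : 0 < (w0.zip w0.tail).length := by
        rw [hzl]; exact graphDist_pos hconn hjl0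
      set q0 := (w0.zip w0.tail).get ⟨0, hzpos⟩ with hq0
      have hq0mem : q0 ∈ w0.zip w0.tail := List.get_mem _ _
      have hq0e : q0 ∈ edges :=
        Finset.mem_filter.2 ⟨Finset.mem_univ _, edges_of_zip w0 hw0.2.2 q0 hq0mem⟩
      have h1 : 1 ≤ edgeUtility P q0.1 q0.2 := by
        apply Finset.card_pos.2
        refine ⟨(j0, l0), Finset.mem_filter.2 ⟨Finset.mem_univ _, hjl0, ?_⟩⟩
        show (q0.1, q0.2) ∈ w0.zip w0.tail
        simpa using hq0mem
      have h2 : 1 ≤ coveringMaxUtility E P :=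
        le_trans h1 (Finset.le_sup (f := fun q : Fin n × Fin n => edgeUtility P q.1 q.2) hq0e)
      exact_mod_cast le_trans h2 (covering_le_K hP)
    -- global chain
    have hTnn : ∀ r : Fin n × Fin n,
        0 ≤ ∑ q ∈ edges, (if edgeInWalk q.1 q.2 (P r.1 r.2) then f q else 0) := by
      intro r
      apply Finset.sum_nonneg
      intro q _
      split
      · exact hfnn q
      · exact le_rfl
    have hS1 : ∑ j, ∑ l, (if j < l then ‖x j - x l‖ ^ 2 else 0)
        = ∑ r ∈ Finset.univ.filter (fun r : Fin n × Fin n => r.1 < r.2), f r := by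
      rw [Finset.sum_filter, ← Finset.univ_product_univ, Finset.sum_product]
    have hchain : ∑ r ∈ Finset.univ.filter (fun r : Fin n × Fin n => r.1 < r.2), f r ≤
        (graphDiam E : ℝ) * ((maxEdgeUtility E : ℝ) * ∑ q ∈ edges, f q) := by
      calc ∑ r ∈ Finset.univ.filter (fun r : Fin n × Fin n => r.1 < r.2), f r
          ≤ ∑ r ∈ Finset.univ.filter (fun r : Fin n × Fin n => r.1 < r.2),
              (graphDiam E : ℝ) * ∑ q ∈ edges, (if edgeInWalk q.1 q.2 (P r.1 r.2) then f q else 0) := by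
            apply Finset.sum_le_sum
            intro r hr
            exact key r (ne_of_lt (Finset.mem_filter.1 hr).2)
        _ ≤ ∑ r ∈ Finset.univ.filter (fun r : Fin n × Fin n => r.1 ≠ r.2),
              (graphDiam E : ℝ) * ∑ q ∈ edges, (if edgeInWalk q.1 q.2 (P r.1 r.2) then f q else 0) := by
            apply Finset.sum_le_sum_of_subset_of_nonneg
            · intro r hr
              exact Finset.mem_filter.2 ⟨Finset.mem_univ _, ne_of_lt (Finset.mem_filter.1 hr).2⟩
            · intro r _ _
              exact mul_nonneg (by positivity) (hTnn r)
        _ = (graphDiam E : ℝ) * ∑ q ∈ edges, (edgeUtility P q.1 q.2 : ℝ) * f q := by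
            rw [← Finset.mul_sum]
            congr 1
            rw [Finset.sum_comm]
            apply Finset.sum_congr rfl
            intro q _
            rw [← Finset.sum_filter, Finset.sum_const, Finset.filter_filter]
            rw [nsmul_eq_mul]
            rfl
        _ ≤ (graphDiam E : ℝ) * ∑ q ∈ edges, (maxEdgeUtility E : ℝ) * f q := by
            apply mul_le_mul_of_nonneg_left _ (by positivity)
            apply Finset.sum_le_sum
            intro q hq
            exact mul_le_mul_of_nonneg_right (hKle q hq) (hfnn q)
        _ = (graphDiam E : ℝ) * ((maxEdgeUtility E : ℝ) * ∑ q ∈ edges, f q) := by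
            rw [← Finset.mul_sum]
    have hDK : (0:ℝ) < (graphDiam E : ℝ) * (maxEdgeUtility E : ℝ) := by nlinarith
    rw [hS1]
    calc (1 / ((graphDiam E : ℝ) * (maxEdgeUtility E : ℝ))) *
          ∑ r ∈ Finset.univ.filter (fun r : Fin n × Fin n => r.1 < r.2), f r
        ≤ (1 / ((graphDiam E : ℝ) * (maxEdgeUtility E : ℝ))) *
          ((graphDiam E : ℝ) * ((maxEdgeUtility E : ℝ) * ∑ q ∈ edges, f q)) := by
          apply mul_le_mul_of_nonneg_left hchain (by positivity)
      _ = ∑ q ∈ edges, f q := by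
          field_simp
  · have hlt : ∀ j l : Fin n, ¬ j < l := fun j l h => hex ⟨j, l, ne_of_lt h⟩
    simp only [hlt, if_false, Finset.sum_const_zero, mul_zero]
    exact hRHS
end

section
/- Suppose each f_i : R^p → R has L-Lipschitz gradient, x* minimizes Σ_i f_i (so Σ_i ∇f_i(x*) = 0), and Σ_i y_i = Σ_i ∇f_i(x_i) for points x_1,...,x_n. If φ is a stochastic vector with positive entries and x̂ = Σ_ℓ φ_ℓ x_ℓ, then ‖Σ_i y_i‖ ≤ L·sqrt(n/min(φ)) · (‖x̂ − x*‖ + sqrt(Σ_i φ_i ‖x_i − x̂‖²)). -/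
theorem stmt_14 {n p : ℕ} (L : ℝ) (hL : 0 < L)
    (f : Fin n → EuclideanSpace ℝ (Fin p) → ℝ)
    (g : Fin n → EuclideanSpace ℝ (Fin p) → EuclideanSpace ℝ (Fin p))
    (hg : ∀ i z, HasGradientAt (f i) (g i z) z)
    (hlip : ∀ i z u, ‖g i z - g i u‖ ≤ L * ‖z - u‖)
    (xstar : EuclideanSpace ℝ (Fin p)) (hmin : ∀ z, ∑ i, f i xstar ≤ ∑ i, f i z)
    (x y : Fin n → EuclideanSpace ℝ (Fin p))
    (hy : ∑ i, y i = ∑ i, g i (x i))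
    (φ : Fin n → ℝ) (hφ : ∀ i, 0 < φ i) (hφsum : ∑ i, φ i = 1) :
    ‖∑ i, y i‖ ≤
      L * Real.sqrt (n / ⨅ i, φ i) *
        (‖(∑ ℓ, φ ℓ • x ℓ) - xstar‖ +
          Real.sqrt (∑ i, φ i * ‖x i - ∑ ℓ, φ ℓ • x ℓ‖ ^ 2)) := by
  -- n ≠ 0
  have hn : 0 < n := by
    rcases Nat.eq_zero_or_pos n with h | h
    · subst h; simp at hφsum
    · exact h
  haveI : Nonempty (Fin n) := ⟨⟨0, hn⟩⟩
  set m := ⨅ i, φ i with hm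
  obtain ⟨j, hj⟩ := exists_eq_ciInf_of_finite (f := φ)
  have hm0 : 0 < m := by rw [hm, ← hj]; exact hφ j
  have hmle : ∀ i, m ≤ φ i := fun i => ciInf_le (Finite.bddBelow_range φ) i
  -- sum of gradients at xstar is zero
  have hgstar : ∑ i, g i xstar = 0 := by
    have hfd : HasFDerivAt (fun z => ∑ i, f i z)
        (∑ i, (InnerProductSpace.toDual ℝ (EuclideanSpace ℝ (Fin p))) (g i xstar)) xstar :=
      HasFDerivAt.fun_sum fun i _ => (hg i xstar).hasFDerivAt
    have hlm : IsLocalMin (fun z => ∑ i, f i z) xstar :=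
      Filter.Eventually.of_forall hmin
    have h0 := hlm.hasFDerivAt_eq_zero hfd
    have : (InnerProductSpace.toDual ℝ (EuclideanSpace ℝ (Fin p))) (∑ i, g i xstar) = 0 := by
      rw [map_sum]; exact h0
    exact (InnerProductSpace.toDual ℝ _).injective (by simpa using this)
  set xh : EuclideanSpace ℝ (Fin p) := ∑ ℓ, φ ℓ • x ℓ with hxh
  set a : Fin n → ℝ := fun i => ‖x i - xh‖ with ha
  set Q : ℝ := Real.sqrt (∑ i, φ i * a i ^ 2) with hQ
  have hQ0 : 0 ≤ Q := Real.sqrt_nonneg _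
  have hs : (0:ℝ) ≤ Real.sqrt (n / m) := Real.sqrt_nonneg _
  -- step: n ≤ sqrt (n/m)
  have hnm : (n:ℝ) * m ≤ 1 := by
    calc (n:ℝ) * m = ∑ _i : Fin n, m := by simp [mul_comm]
    _ ≤ ∑ i, φ i := Finset.sum_le_sum fun i _ => hmle i
    _ = 1 := hφsum
  have hnsqrt : (n:ℝ) ≤ Real.sqrt (n / m) := by
    have hdiv : (0:ℝ) ≤ (n:ℝ)/m := div_nonneg n.cast_nonneg hm0.le
    rw [Real.le_sqrt (by positivity) hdiv, le_div_iff₀ hm0]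
    calc (n:ℝ)^2 * m = (n:ℝ) * ((n:ℝ) * m) := by ring
    _ ≤ (n:ℝ) * 1 := by
        apply mul_le_mul_of_nonneg_left hnm (by positivity)
    _ = n := by ring
  -- Cauchy-Schwarz: ∑ a i ≤ sqrt (n/m) * Q
  have hCS : ∑ i, a i ≤ Real.sqrt (n / m) * Q := by
    have key : (∑ i, a i) ^ 2 ≤ (∑ i : Fin n, (φ i)⁻¹) * (∑ i, φ i * a i ^ 2) := by
      have h1 : ∑ i, a i = ∑ i, Real.sqrt (φ i)⁻¹ * (Real.sqrt (φ i) * a i) := by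
        apply Finset.sum_congr rfl
        intro i _
        rw [Real.sqrt_inv, ← mul_assoc, inv_mul_cancel₀ (Real.sqrt_pos.2 (hφ i)).ne', one_mul]
      rw [h1]
      calc (∑ i, Real.sqrt (φ i)⁻¹ * (Real.sqrt (φ i) * a i)) ^ 2
          ≤ (∑ i, Real.sqrt (φ i)⁻¹ ^ 2) * (∑ i, (Real.sqrt (φ i) * a i) ^ 2) :=
            Finset.sum_mul_sq_le_sq_mul_sq _ _ _
        _ = (∑ i : Fin n, (φ i)⁻¹) * (∑ i, φ i * a i ^ 2) := by
            congr 1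
            · apply Finset.sum_congr rfl; intro i _
              exact Real.sq_sqrt (inv_nonneg.2 (hφ i).le)
            · apply Finset.sum_congr rfl; intro i _
              rw [mul_pow, Real.sq_sqrt (hφ i).le]
    have hinv : (∑ i : Fin n, (φ i)⁻¹) ≤ (n : ℝ) / m := by
      calc (∑ i : Fin n, (φ i)⁻¹) ≤ ∑ _i : Fin n, m⁻¹ :=
            Finset.sum_le_sum fun i _ => inv_anti₀ hm0 (hmle i)
        _ = (n : ℝ) / m := by simp [div_eq_mul_inv, mul_comm]
    have key2 : (∑ i, a i) ^ 2 ≤ ((n:ℝ) / m) * (∑ i, φ i * a i ^ 2) := by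
      refine key.trans (mul_le_mul_of_nonneg_right hinv ?_)
      exact Finset.sum_nonneg fun i _ => mul_nonneg (hφ i).le (sq_nonneg _)
    have hsum0 : 0 ≤ ∑ i, a i := Finset.sum_nonneg fun i _ => norm_nonneg _
    calc ∑ i, a i = Real.sqrt ((∑ i, a i)^2) := (Real.sqrt_sq hsum0).symm
      _ ≤ Real.sqrt (((n:ℝ)/m) * (∑ i, φ i * a i ^ 2)) := Real.sqrt_le_sqrt key2
      _ = Real.sqrt ((n:ℝ)/m) * Q := Real.sqrt_mul (div_nonneg n.cast_nonneg hm0.le) _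
  -- main chain
  calc ‖∑ i, y i‖ = ‖∑ i, (g i (x i) - g i xstar)‖ := by
        rw [hy, Finset.sum_sub_distrib, hgstar, sub_zero]
    _ ≤ ∑ i, ‖g i (x i) - g i xstar‖ := norm_sum_le _ _
    _ ≤ ∑ i, L * ‖x i - xstar‖ := Finset.sum_le_sum fun i _ => hlip i _ _
    _ ≤ ∑ i, L * (a i + ‖xh - xstar‖) := by
        apply Finset.sum_le_sum
        intro i _
        apply mul_le_mul_of_nonneg_left _ hL.le
        calc ‖x i - xstar‖ = dist (x i) xstar := (dist_eq_norm _ _).symm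
          _ ≤ dist (x i) xh + dist xh xstar := dist_triangle _ _ _
          _ = a i + ‖xh - xstar‖ := by rw [dist_eq_norm, dist_eq_norm]
    _ = L * ((∑ i, a i) + n * ‖xh - xstar‖) := by
        rw [← Finset.mul_sum, Finset.sum_add_distrib]
        simp [mul_comm]
    _ ≤ L * (Real.sqrt (n/m) * Q + Real.sqrt (n/m) * ‖xh - xstar‖) := by
        apply mul_le_mul_of_nonneg_left _ hL.le
        apply add_le_add hCS
        exact mul_le_mul_of_nonneg_right hnsqrt (norm_nonneg _)
    _ = L * Real.sqrt (n / m) * (‖xh - xstar‖ + Q) := by ring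
end

section
/- Let M(α) be the 3×3 matrix with rows [1 − αnσμ, αL√n φ, α], [αL√n φ, c + αL√n φ, α], [αL²r√n φ, Lr(1+c)φ + αL²r√n φ, τ + αLr], where c, τ ∈ (0,1) and σ, μ, L, r, φ, n > 0. If α > 0 satisfies α ≤ min{(1−c)/(L√n φ), (1−τ)/(Lr), nσμ(1−τ)(1−c)/η, 2/(n(L+μ))} with η = L(nσμ + L√n φ)((1+c)rφ + (1−c)r + (1−τ)√n φ), and strict inequality holds in the first three bounds, then det(I − M(α)) > 0 and all diagonal entries of M(α) are less than 1, hence the spectral radius of M(α) is less than 1. -/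
/-!
For nonnegative `M` with `det (1 - M) > 0`, the vector `v = adj (1 - M) · 𝟙` satisfies
`(1 - M) v = det (1 - M) · 𝟙 > 0`, i.e. `M v < v` coordinatewise. If moreover `v > 0`, every
complex eigenvalue `z` of `M` has `‖z‖ < 1`: at the coordinate where an eigenvector `x` attains the
largest ratio `ρ = ‖x i‖ / v i`, the triangle inequality gives
`‖z‖ ‖x i‖ ≤ ρ (M v) i < ρ v i = ‖x i‖`.
For `M(α)` the coordinates of `v` are explicit; they are positive because the determinant
condition already makes the leading `2 × 2` principal minor of `1 - M(α)` positive. The step-size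
bounds give nonnegativity of `M(α)`, its diagonal entries below `1`, and `det (1 - M(α)) > 0`.
-/

open Matrix

theorem Matrix.norm_lt_one_of_mem_spectrum_of_mulVec_lt {ι : Type*} [Fintype ι] [DecidableEq ι]
    {M : Matrix ι ι ℝ} (hM : ∀ i j, 0 ≤ M i j) {v : ι → ℝ} (hv : ∀ i, 0 < v i)
    (hMv : ∀ i, (M *ᵥ v) i < v i) {z : ℂ} (hz : z ∈ spectrum ℂ (M.map (algebraMap ℝ ℂ))) :
    ‖z‖ < 1 := by
  rw [← spectrum_toLin', ← Module.End.hasEigenvalue_iff_mem_spectrum] at hz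
  obtain ⟨x, hx, hx0⟩ := hz.exists_hasEigenvector
  have hMx : ∀ i, z * x i = ∑ j, (M i j : ℂ) * x j := fun i => by
    have := congrFun (Module.End.mem_eigenspace_iff.mp hx) i
    simpa [toLin'_apply, mulVec, dotProduct, eq_comm] using this
  obtain ⟨j, hj⟩ := Function.ne_iff.mp hx0
  have : Nonempty ι := ⟨j⟩
  -- `x` is dominated by `ρ • v`, with equality at the coordinate `i`
  obtain ⟨i, hi⟩ := Finite.exists_max fun j => ‖x j‖ / v j
  set ρ := ‖x i‖ / v i
  have hρ : 0 < ρ := (div_pos (norm_pos_iff.mpr hj) (hv j)).trans_le (hi j)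
  have hxi : ‖x i‖ = ρ * v i := (div_mul_cancel₀ _ (hv i).ne').symm
  have key : ‖z‖ * ‖x i‖ < 1 * ‖x i‖ := by
    rw [one_mul, ← norm_mul, hMx i]
    calc ‖∑ j, (M i j : ℂ) * x j‖ ≤ ∑ j, M i j * ‖x j‖ := by
          refine (norm_sum_le _ _).trans_eq (Finset.sum_congr rfl fun j _ => ?_)
          rw [norm_mul, Complex.norm_real, Real.norm_of_nonneg (hM i j)]
      _ ≤ ∑ j, M i j * (ρ * v j) := by
          gcongr with j
          · exact hM i j
          · exact (div_le_iff₀ (hv j)).mp (hi j)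
      _ = ρ * (M *ᵥ v) i := by
          simp only [mulVec, dotProduct, Finset.mul_sum]
          exact Finset.sum_congr rfl fun j _ => by ring
      _ < ρ * v i := mul_lt_mul_of_pos_left (hMv i) hρ
      _ = ‖x i‖ := hxi.symm
  exact lt_of_mul_lt_mul_right key (norm_nonneg _)

theorem Matrix.mulVec_adjugate_one_sub_lt {ι R : Type*} [Fintype ι] [DecidableEq ι]
    [CommRing R] [PartialOrder R] [IsStrictOrderedRing R]
    {M : Matrix ι ι R} (hdet : 0 < (1 - M).det) (i : ι) :
    (M *ᵥ (adjugate (1 - M) *ᵥ 1)) i < (adjugate (1 - M) *ᵥ 1) i := by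
  have h : (1 - M) *ᵥ (adjugate (1 - M) *ᵥ 1) = (1 - M).det • 1 := by
    rw [mulVec_mulVec, mul_adjugate, smul_mulVec, one_mulVec]
  have hi := congrFun h i
  simp only [sub_mulVec, one_mulVec, Pi.sub_apply, Pi.smul_apply, Pi.one_apply, smul_eq_mul,
    mul_one] at hi
  exact sub_pos.mp (hi ▸ hdet)

theorem Matrix.norm_lt_one_of_mem_spectrum_of_adjugate_pos {ι : Type*} [Fintype ι] [DecidableEq ι]
    {M : Matrix ι ι ℝ} (hM : ∀ i j, 0 ≤ M i j) (hdet : 0 < (1 - M).det)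
    (hadj : ∀ i, 0 < (adjugate (1 - M) *ᵥ 1) i) {z : ℂ}
    (hz : z ∈ spectrum ℂ (M.map (algebraMap ℝ ℂ))) : ‖z‖ < 1 :=
  norm_lt_one_of_mem_spectrum_of_mulVec_lt hM hadj (mulVec_adjugate_one_sub_lt hdet) hz

/-- The shape of `M(α)`, with `a = αnσμ`, `b = αL√nφ`, `d = α`, `g = αL²r√nφ`, `h = Lr(1+c)φ` and
`t = τ + αLr`. -/
def errorMatrix (a b c d g h t : ℝ) : Matrix (Fin 3) (Fin 3) ℝ :=
  !![1 - a, b, d; b, c + b, d; g, h + g, t]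

section

variable (a b c d g h t : ℝ)

theorem det_one_sub_errorMatrix :
    (1 - errorMatrix a b c d g h t).det =
      (1 - t) * (a * (1 - c - b) - b ^ 2) - d * ((a + b) * (h + g) + g * (1 - c)) := by
  simp [errorMatrix, det_fin_three, one_apply]
  ring

theorem adjugate_one_sub_errorMatrix_mulVec_one :
    adjugate (1 - errorMatrix a b c d g h t) *ᵥ 1 =
      ![(1 - c) * (1 - t + d), (a + b) * (1 - t + d),
        a * (1 - c - b) - b ^ 2 + (a + b) * (h + g) + g * (1 - c)] := by
  ext i
  fin_cases i <;>
    simp [errorMatrix, adjugate_fin_three, one_apply, mulVec, dotProduct, Fin.sum_univ_three] <;>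
    ring

end

theorem norm_lt_one_of_mem_spectrum_errorMatrix {a b c d g h t : ℝ} (ha₀ : 0 < a)
    (ha₁ : a ≤ 1) (hb : 0 ≤ b) (hc₀ : 0 ≤ c) (hc₁ : c < 1) (hd : 0 ≤ d) (hg : 0 ≤ g)
    (hh : 0 ≤ h) (ht₀ : 0 ≤ t) (ht₁ : t < 1) (hdet : 0 < (1 - errorMatrix a b c d g h t).det)
    {z : ℂ} (hz : z ∈ spectrum ℂ ((errorMatrix a b c d g h t).map (algebraMap ℝ ℂ))) :
    ‖z‖ < 1 := by
  refine norm_lt_one_of_mem_spectrum_of_adjugate_pos (fun i j => ?_) hdet (fun i => ?_) hz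
  · fin_cases i <;> fin_cases j <;> simp [errorMatrix] <;> linarith
  rw [det_one_sub_errorMatrix] at hdet
  -- the determinant forces the leading `2 × 2` principal minor of `1 - M` to be positive
  have hminor : 0 < a * (1 - c - b) - b ^ 2 := by
    have : 0 ≤ d * ((a + b) * (h + g) + g * (1 - c)) := by
      have : 0 ≤ 1 - c := by linarith
      positivity
    exact pos_of_mul_pos_right (by linarith) (by linarith : (0 : ℝ) ≤ 1 - t)
  rw [adjugate_one_sub_errorMatrix_mulVec_one]
  have : 0 < 1 - c := by linarith
  have : 0 < 1 - t + d := by linarith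
  fin_cases i <;> simp <;> positivity

theorem stmt_17 (n : ℕ) (hn : 0 < n) (σ μ L r φ c τ α : ℝ)
    (hσ : 0 < σ) (hσn : σ ≤ 1 / n) (hμ : 0 < μ) (hμL : μ ≤ L)
    (hr : 1 ≤ r) (hφ : 1 ≤ φ)
    (hc : c ∈ Set.Ioo (0 : ℝ) 1) (hτ : τ ∈ Set.Ioo (0 : ℝ) 1)
    (hα0 : 0 < α)
    (hα1 : α < (1 - c) / (L * Real.sqrt n * φ))
    (hα2 : α < (1 - τ) / (L * r))
    (hα3 : α < n * σ * μ * (1 - τ) * (1 - c) /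
      (L * (n * σ * μ + L * Real.sqrt n * φ) *
        ((1 + c) * r * φ + (1 - c) * r + (1 - τ) * Real.sqrt n * φ)))
    (hα4 : α ≤ 2 / (n * (L + μ)))
    (M : Matrix (Fin 3) (Fin 3) ℝ)
    (hM : M = !![1 - α * n * σ * μ, α * L * Real.sqrt n * φ, α;
                 α * L * Real.sqrt n * φ, c + α * L * Real.sqrt n * φ, α;
                 α * L ^ 2 * r * Real.sqrt n * φ,
                   L * r * (1 + c) * φ + α * L ^ 2 * r * Real.sqrt n * φ, τ + α * L * r]) :
    0 < (1 - M).det ∧ (∀ i, M i i < 1) ∧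
      ∀ z ∈ spectrum ℂ (M.map (algebraMap ℝ ℂ)), ‖z‖ < 1 := by
  obtain ⟨hc₀, hc₁⟩ := hc
  obtain ⟨hτ₀, hτ₁⟩ := hτ
  have hL : 0 < L := hμ.trans_le hμL
  have hn' : (0 : ℝ) < n := Nat.cast_pos.mpr hn
  have hr' : 0 < r := one_pos.trans_le hr
  have hφ' : 0 < φ := one_pos.trans_le hφ
  have hs : 0 < Real.sqrt n := Real.sqrt_pos.mpr hn'
  have hb : α * L * Real.sqrt n * φ < 1 - c := by
    have := (lt_div_iff₀ (by positivity)).mp hα1; linarith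
  have ht : τ + α * L * r < 1 := by
    have := (lt_div_iff₀ (by positivity)).mp hα2; linarith
  have ha : α * n * σ * μ ≤ 1 := by
    have hnσ : n * σ ≤ 1 := by rwa [le_div_iff₀ hn', mul_comm] at hσn
    have hn₁ : (1 : ℝ) ≤ n := Nat.one_le_cast.mpr hn
    have := (le_div_iff₀ (by positivity)).mp hα4
    calc α * n * σ * μ = (n * σ) * (α * μ) := by ring
      _ ≤ α * μ := mul_le_of_le_one_left (by positivity) hnσ
      _ ≤ α * (L + μ) / 2 := by linarith [mul_le_mul_of_nonneg_left hμL hα0.le]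
      _ ≤ α * (n * (L + μ)) / 2 := by gcongr; exact le_mul_of_one_le_left (by positivity) hn₁
      _ ≤ 1 := by linarith
  have hM' : M = errorMatrix (α * n * σ * μ) (α * L * Real.sqrt n * φ) c α
      (α * L ^ 2 * r * Real.sqrt n * φ) (L * r * (1 + c) * φ) (τ + α * L * r) := hM
  have hdet : 0 < (1 - M).det := by
    have := (lt_div_iff₀ (by positivity)).mp hα3
    -- `det (1 - M) = α (nσμ(1-τ)(1-c) - α η)`
    rw [hM', det_one_sub_errorMatrix]
    linarith [mul_lt_mul_of_pos_left this hα0]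
  refine ⟨hdet, fun i => ?_, fun z hz => ?_⟩
  · fin_cases i <;> simp [hM] <;> first | positivity | linarith
  · rw [hM'] at hdet hz
    exact norm_lt_one_of_mem_spectrum_errorMatrix (by positivity) ha (by positivity) hc₀.le
      hc₁ hα0.le (by positivity) (by positivity) (by positivity) ht hdet hz
end

section
/- Let B be a nonnegative n×n column-stochastic matrix and ν a vector with positive entries. Then for the vectors w_i = Σ_j B_{ij} y_j and π = Bν (assumed to have positive entries), the identity Σ_i ‖w_i‖²/π_i = Σ_j ‖y_j‖²/ν_j − (1/2) Σ_i π_i^{-1} Σ_j Σ_ℓ B_{ij} ν_j B_{iℓ} ν_ℓ ‖y_j/ν_j − y_ℓ/ν_ℓ‖² holds. -/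
open Finset
open scoped RealInnerProductSpace

lemma key_expand {E : Type*} [NormedAddCommGroup E] [InnerProductSpace ℝ E] {m : ℕ}
    (c : Fin m → ℝ) (v : Fin m → E) :
    ∑ j, ∑ ℓ, c j * c ℓ * ‖v j - v ℓ‖ ^ 2
      = 2 * (∑ j, c j) * (∑ j, c j * ‖v j‖ ^ 2) - 2 * ‖∑ j, c j • v j‖ ^ 2 := by
  have hnorm : ‖∑ j, c j • v j‖ ^ 2 = ∑ j, ∑ ℓ, c j * c ℓ * (inner ℝ (v j) (v ℓ) : ℝ) := by
    rw [← real_inner_self_eq_norm_sq, sum_inner]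
    refine Finset.sum_congr rfl fun j _ => ?_
    rw [inner_sum]
    refine Finset.sum_congr rfl fun ℓ _ => ?_
    rw [real_inner_smul_left, real_inner_smul_right]; ring
  have hns : ∀ j ℓ : Fin m, c j * c ℓ * ‖v j - v ℓ‖ ^ 2
      = c j * c ℓ * ‖v j‖ ^ 2 + c j * c ℓ * ‖v ℓ‖ ^ 2
        - 2 * (c j * c ℓ * (inner ℝ (v j) (v ℓ) : ℝ)) := by
    intro j ℓ
    rw [norm_sub_sq_real]; ring
  simp only [hns, Finset.sum_sub_distrib, Finset.sum_add_distrib]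
  have h1 : ∑ j, ∑ ℓ, c j * c ℓ * ‖v j‖ ^ 2 = (∑ j, c j) * ∑ j, c j * ‖v j‖ ^ 2 := by
    calc ∑ j, ∑ ℓ, c j * c ℓ * ‖v j‖ ^ 2
        = ∑ j, (c j * ‖v j‖ ^ 2) * ∑ ℓ, c ℓ := by
          refine Finset.sum_congr rfl fun j _ => ?_
          rw [Finset.mul_sum]
          exact Finset.sum_congr rfl fun ℓ _ => by ring
      _ = (∑ j, c j) * ∑ j, c j * ‖v j‖ ^ 2 := by rw [← Finset.sum_mul, mul_comm]
  have h2 : ∑ j, ∑ ℓ, c j * c ℓ * ‖v ℓ‖ ^ 2 = (∑ j, c j) * ∑ j, c j * ‖v j‖ ^ 2 := by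
    rw [Finset.sum_comm]
    calc ∑ ℓ, ∑ j, c j * c ℓ * ‖v ℓ‖ ^ 2
        = ∑ ℓ, (c ℓ * ‖v ℓ‖ ^ 2) * ∑ j, c j := by
          refine Finset.sum_congr rfl fun ℓ _ => ?_
          rw [Finset.mul_sum]
          exact Finset.sum_congr rfl fun j _ => by ring
      _ = (∑ j, c j) * ∑ j, c j * ‖v j‖ ^ 2 := by rw [← Finset.sum_mul, mul_comm]
  rw [h1, h2]
  simp only [← Finset.mul_sum]
  rw [← hnorm]
  ring

theorem stmt_19 {n p : ℕ} (B : Matrix (Fin n) (Fin n) ℝ)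
    (hBnn : ∀ i j, 0 ≤ B i j) (hBcol : ∀ j, ∑ i, B i j = 1)
    (ν : Fin n → ℝ) (hν : ∀ j, 0 < ν j)
    (y : Fin n → EuclideanSpace ℝ (Fin p))
    (w : Fin n → EuclideanSpace ℝ (Fin p)) (hw : ∀ i, w i = ∑ j, B i j • y j)
    (π : Fin n → ℝ) (hπ : π = B.mulVec ν) (hπpos : ∀ i, 0 < π i) :
    ∑ i, ‖w i‖ ^ 2 / π i =
      (∑ j, ‖y j‖ ^ 2 / ν j) -
        (1 / 2) * ∑ i, (π i)⁻¹ *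
          ∑ j, ∑ ℓ, B i j * ν j * B i ℓ * ν ℓ * ‖(ν j)⁻¹ • y j - (ν ℓ)⁻¹ • y ℓ‖ ^ 2 := by
  set u : Fin n → EuclideanSpace ℝ (Fin p) := fun j => (ν j)⁻¹ • y j with hu
  have hνne : ∀ j, ν j ≠ 0 := fun j => (hν j).ne'
  have hπeq : ∀ i, π i = ∑ j, B i j * ν j := by
    intro i; rw [hπ]; rfl
  have hweq : ∀ i, w i = ∑ j, (B i j * ν j) • u j := by
    intro i; rw [hw]
    refine Finset.sum_congr rfl fun j _ => ?_
    show B i j • y j = (B i j * ν j) • ((ν j)⁻¹ • y j)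
    rw [smul_smul, mul_assoc, mul_inv_cancel₀ (hνne j), mul_one]
  -- per-i identity
  have hkey : ∀ i, (π i)⁻¹ *
      ∑ j, ∑ ℓ, B i j * ν j * B i ℓ * ν ℓ * ‖(ν j)⁻¹ • y j - (ν ℓ)⁻¹ • y ℓ‖ ^ 2
      = 2 * (∑ j, (B i j * ν j) * ‖u j‖ ^ 2) - 2 * (‖w i‖ ^ 2 / π i) := by
    intro i
    have h := key_expand (fun j => B i j * ν j) u
    have hsum : ∑ j, ∑ ℓ, B i j * ν j * B i ℓ * ν ℓ * ‖(ν j)⁻¹ • y j - (ν ℓ)⁻¹ • y ℓ‖ ^ 2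
        = ∑ j, ∑ ℓ, (B i j * ν j) * (B i ℓ * ν ℓ) * ‖u j - u ℓ‖ ^ 2 := by
      refine Finset.sum_congr rfl fun j _ => Finset.sum_congr rfl fun ℓ _ => by
        rw [hu]; ring_nf
    rw [hsum, h, ← hπeq i, ← hweq i]
    have hπne : π i ≠ 0 := (hπpos i).ne'
    field_simp
  calc ∑ i, ‖w i‖ ^ 2 / π i
      = (∑ i, ∑ j, (B i j * ν j) * ‖u j‖ ^ 2)
        - (1 / 2) * ∑ i, (2 * (∑ j, (B i j * ν j) * ‖u j‖ ^ 2) - 2 * (‖w i‖ ^ 2 / π i)) := by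
        rw [Finset.sum_sub_distrib]
        simp only [← Finset.mul_sum]
        ring
    _ = (∑ j, ‖y j‖ ^ 2 / ν j) -
        (1 / 2) * ∑ i, (π i)⁻¹ *
          ∑ j, ∑ ℓ, B i j * ν j * B i ℓ * ν ℓ * ‖(ν j)⁻¹ • y j - (ν ℓ)⁻¹ • y ℓ‖ ^ 2 := by
        congr 1
        · rw [Finset.sum_comm]
          refine Finset.sum_congr rfl fun j _ => ?_
          have : ∑ i, B i j * ν j * ‖u j‖ ^ 2 = (∑ i, B i j) * (ν j * ‖u j‖ ^ 2) := by
            rw [Finset.sum_mul]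
            exact Finset.sum_congr rfl fun i _ => by ring
          rw [this, hBcol j, one_mul, hu]
          rw [norm_smul, Real.norm_eq_abs, abs_of_pos (inv_pos.mpr (hν j))]
          field_simp [hνne j]
        · congr 1
          exact Finset.sum_congr rfl fun i _ => (hkey i).symm
end
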